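/- arXiv:1111.0219 — 4 statements merged into one kernel-verified Lean document; each statement's English description precedes it below -/
import Mathlib

section
/- Fix a01, a10 ∈ (0,1) with a01 + a10 ≤ 1, and let a00 = 1−a01, a11 = 1−a10. Suppose real numbers P0, P1 ∈ [0,1], and define η = a01·P1 + a00·(1−P0) and ρ = a11·P1 + a10·(1−P0). If ρ ≤ ρmax for some ρmax ∈ (0,1), then η ≤ ρmax + (1 − a01 − a10)·min{ρmax/a10, (1 − ρmax)/a11}. -/
theorem ur_upper_bound_case1
    (a01 a10 ρmax P0 P1 : ℝ)
    (h01 : a01 ∈ Set.Ioo (0:ℝ) 1) (h10 : a10 ∈ Set.Ioo (0:ℝ) 1)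
    (hsum : a01 + a10 ≤ 1)
    (hP0 : P0 ∈ Set.Icc (0:ℝ) 1) (hP1 : P1 ∈ Set.Icc (0:ℝ) 1)
    (hρmax : ρmax ∈ Set.Ioo (0:ℝ) 1)
    (η ρ : ℝ)
    (hη : η = a01 * P1 + (1 - a01) * (1 - P0))
    (hρ : ρ = (1 - a10) * P1 + a10 * (1 - P0))
    (hcon : ρ ≤ ρmax) :
    η ≤ ρmax + (1 - a01 - a10) * min (ρmax / a10) ((1 - ρmax) / (1 - a10)) := by
  obtain ⟨ha01, ha01'⟩ := h01
  obtain ⟨ha10, ha10'⟩ := h10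
  obtain ⟨hP0l, hP0u⟩ := hP0
  obtain ⟨hP1l, hP1u⟩ := hP1
  obtain ⟨hρl, hρu⟩ := hρmax
  have hc : 0 ≤ 1 - a01 - a10 := by linarith
  rcases le_total (ρmax / a10) ((1 - ρmax) / (1 - a10)) with h | h
  · rw [min_eq_left h]
    have h1 : a10 * (ρmax / a10) = ρmax := by field_simp
    nlinarith [mul_nonneg hc (sub_nonneg.mpr (show (1 - P0) ≤ ρmax / a10 by
      rw [le_div_iff₀ ha10]; nlinarith)), mul_nonneg hc hP1l]
  · rw [min_eq_right h]
    have hb : 0 < 1 - a10 := by linarith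
    have h1 : (1 - a10) * ((1 - ρmax) / (1 - a10)) = 1 - ρmax := by field_simp
    nlinarith [mul_nonneg hc (show 0 ≤ (1 - ρ) - (1 - a10) * ((1 - P0) - P1) by nlinarith),
      mul_nonneg ha01.le (sub_nonneg.mpr hcon)]
end

section
/- Fix a01, a10 ∈ (0,1) with a01 + a10 > 1, and let a00 = 1−a01, a11 = 1−a10. Suppose P0, P1 ∈ [0,1], and define η = a01·P1 + a00·(1−P0) and ρ = a11·P1 + a10·(1−P0). If ρ ≤ ρmax for some ρmax ∈ (0,1), then η ≤ ρmax − (1 − a01 − a10)·min{ρmax/a11, (1 − ρmax)/a10}. -/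
theorem ur_upper_bound_case2
    (a01 a10 ρmax P0 P1 : ℝ)
    (h01 : a01 ∈ Set.Ioo (0:ℝ) 1) (h10 : a10 ∈ Set.Ioo (0:ℝ) 1)
    (hsum : a01 + a10 > 1)
    (hP0 : P0 ∈ Set.Icc (0:ℝ) 1) (hP1 : P1 ∈ Set.Icc (0:ℝ) 1)
    (hρmax : ρmax ∈ Set.Ioo (0:ℝ) 1)
    (η ρ : ℝ)
    (hη : η = a01 * P1 + (1 - a01) * (1 - P0))
    (hρ : ρ = (1 - a10) * P1 + a10 * (1 - P0))
    (hcon : ρ ≤ ρmax) :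
    η ≤ ρmax - (1 - a01 - a10) * min (ρmax / (1 - a10)) ((1 - ρmax) / a10) := by
  obtain ⟨h01a, h01b⟩ := h01
  obtain ⟨h10a, h10b⟩ := h10
  obtain ⟨hP0a, hP0b⟩ := hP0
  obtain ⟨hP1a, hP1b⟩ := hP1
  obtain ⟨hma, hmb⟩ := hρmax
  have h11 : (0:ℝ) < 1 - a10 := by linarith
  have hP1ρ : (1 - a10) * P1 ≤ ρ := by nlinarith
  rcases min_cases (ρmax / (1 - a10)) ((1 - ρmax) / a10) with ⟨hm, hle⟩ | ⟨hm, hle⟩ <;>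
    rw [hm]
  · have h1 : (1 - a10) * (ρmax / (1 - a10)) = ρmax := by field_simp
    nlinarith [mul_nonneg h10a.le (sub_nonneg.mpr hP0b)]
  · have h2 : a10 * ((1 - ρmax) / a10) = 1 - ρmax := by field_simp
    nlinarith [mul_nonneg h10a.le (sub_nonneg.mpr hP0b)]
end

section
/- Let (q_k, q_{k+1}) be two successive states of a stationary two-state Markov chain with positive transition probabilities a_{ij} satisfying a01 + a10 < 1, stationary distribution π0 = a10/(a01+a10), π1 = a01/(a01+a10). Let C be a random variable conditionally independent of q_{k+1} given q_k, and write p_i = Pr{C ≤ x | q_k = i}. Then Pr{C ≤ x | q_{k+1} = j} = (p0·a_{0j}·π0 + p1·a_{1j}·π1)/π_j, and consequently p0 ≥ p1 if and only if Pr{C ≤ x | q_{k+1} = 0} ≥ Pr{C ≤ x | q_{k+1} = 1}. -/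
open MeasureTheory ProbabilityTheory

lemma cond_toReal_aux {Ω : Type*} [MeasurableSpace Ω] (μ : Measure Ω)
    {s : Set Ω} (hs : MeasurableSet s) (t : Set Ω) :
    (μ[|s] t).toReal = (μ (s ∩ t)).toReal / (μ s).toReal := by
  rw [ProbabilityTheory.cond_apply hs, ENNReal.toReal_mul, ENNReal.toReal_inv,
    div_eq_mul_inv, mul_comm]

lemma split_aux {Ω : Type*} [MeasurableSpace Ω] (μ : Measure Ω) [IsFiniteMeasure μ]
    (T : Set Ω) {U : Set Ω} (hU : MeasurableSet U) :
    (μ T).toReal = (μ (T ∩ U)).toReal + (μ (T ∩ Uᶜ)).toReal := by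
  rw [← ENNReal.toReal_add (measure_ne_top _ _) (measure_ne_top _ _)]
  congr 1
  rw [← Set.diff_eq, measure_inter_add_diff T hU]

/-- Lemma 3: conditioning a CDF comparison on the next state of a stationary
two-state Markov chain. `Qk`, `Qk1` are the events `{q_k = 1}`, `{q_{k+1} = 1}`. -/
theorem cdf_comparison_next_state
    {Ω : Type*} [MeasurableSpace Ω] (μ : Measure Ω) [IsProbabilityMeasure μ]
    (a01 a10 : ℝ)
    (h01 : a01 ∈ Set.Ioo (0:ℝ) 1) (h10 : a10 ∈ Set.Ioo (0:ℝ) 1)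
    (hsum : a01 + a10 < 1)
    (π0 π1 : ℝ) (hπ0 : π0 = a10 / (a01 + a10)) (hπ1 : π1 = a01 / (a01 + a10))
    (Qk Qk1 : Set Ω) (hQk : MeasurableSet Qk) (hQk1 : MeasurableSet Qk1)
    (C : Ω → ℝ) (hC : Measurable C) (x : ℝ)
    -- stationary initial distribution
    (hstat : (μ Qk).toReal = π1) (hstat1 : (μ Qk1).toReal = π1)
    -- transition probabilities
    (htrans11 : (μ[|Qk] Qk1).toReal = 1 - a10)
    (htrans01 : (μ[|Qkᶜ] Qk1).toReal = a01)
    -- C is conditionally independent of q_{k+1} given q_k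
    (hci1 : μ[|Qk] ({ω | C ω ≤ x} ∩ Qk1) = μ[|Qk] {ω | C ω ≤ x} * μ[|Qk] Qk1)
    (hci0 : μ[|Qkᶜ] ({ω | C ω ≤ x} ∩ Qk1) = μ[|Qkᶜ] {ω | C ω ≤ x} * μ[|Qkᶜ] Qk1)
    (p0 p1 : ℝ)
    (hp0 : p0 = (μ[|Qkᶜ] {ω | C ω ≤ x}).toReal)
    (hp1 : p1 = (μ[|Qk] {ω | C ω ≤ x}).toReal) :
    (μ[|Qk1ᶜ] {ω | C ω ≤ x}).toReal
        = (p0 * (1 - a01) * π0 + p1 * a10 * π1) / π0 ∧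
      (μ[|Qk1] {ω | C ω ≤ x}).toReal
        = (p0 * a01 * π0 + p1 * (1 - a10) * π1) / π1 ∧
      (p0 ≥ p1 ↔
        (μ[|Qk1ᶜ] {ω | C ω ≤ x}).toReal ≥ (μ[|Qk1] {ω | C ω ≤ x}).toReal) := by
  set S := {ω | C ω ≤ x} with hSdef
  obtain ⟨ha01, ha01'⟩ := h01
  obtain ⟨ha10, ha10'⟩ := h10
  have hne01 : a01 ≠ 0 := ne_of_gt ha01
  have hne10 : a10 ≠ 0 := ne_of_gt ha10
  have hs : (0:ℝ) < a01 + a10 := by linarith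
  have hnes : a01 + a10 ≠ 0 := ne_of_gt hs
  have hπ1pos : 0 < π1 := by rw [hπ1]; positivity
  have hπ0pos : 0 < π0 := by rw [hπ0]; positivity
  have hsum1 : π0 + π1 = 1 := by
    rw [hπ0, hπ1]; field_simp; ring
  -- complements
  have hcompl : ∀ (U : Set Ω), MeasurableSet U → (μ U).toReal + (μ Uᶜ).toReal = 1 := by
    intro U hU
    rw [← ENNReal.toReal_add (measure_ne_top _ _) (measure_ne_top _ _),
      measure_add_measure_compl hU, measure_univ, ENNReal.toReal_one]
  have hQkc : (μ Qkᶜ).toReal = π0 := by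
    have := hcompl Qk hQk; linarith
  have hQk1c : (μ Qk1ᶜ).toReal = π0 := by
    have := hcompl Qk1 hQk1; linarith
  -- transition joint probabilities
  have ht1 : (μ (Qk ∩ Qk1)).toReal = (1 - a10) * π1 := by
    rw [cond_toReal_aux μ hQk, hstat] at htrans11
    have := (div_eq_iff (ne_of_gt hπ1pos)).mp htrans11
    linarith
  have ht0 : (μ (Qkᶜ ∩ Qk1)).toReal = a01 * π0 := by
    rw [cond_toReal_aux μ hQk.compl, hQkc] at htrans01
    have := (div_eq_iff (ne_of_gt hπ0pos)).mp htrans01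
    linarith
  -- p_i joint probabilities
  have hm1 : (μ (Qk ∩ S)).toReal = p1 * π1 := by
    rw [hp1, cond_toReal_aux μ hQk, hstat]
    field_simp
  have hm0 : (μ (Qkᶜ ∩ S)).toReal = p0 * π0 := by
    rw [hp0, cond_toReal_aux μ hQk.compl, hQkc]
    field_simp
  -- conditional independence joint probabilities
  have hc1 : (μ (Qk ∩ (S ∩ Qk1))).toReal = p1 * (1 - a10) * π1 := by
    have h := congrArg ENNReal.toReal hci1
    rw [ENNReal.toReal_mul] at h
    simp only [cond_toReal_aux μ hQk, hstat] at h
    rw [ht1, hm1] at h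
    rw [(div_eq_iff (ne_of_gt hπ1pos)).mp h]
    field_simp
    try ring
  have hc0 : (μ (Qkᶜ ∩ (S ∩ Qk1))).toReal = p0 * a01 * π0 := by
    have h := congrArg ENNReal.toReal hci0
    rw [ENNReal.toReal_mul] at h
    simp only [cond_toReal_aux μ hQk.compl, hQkc] at h
    rw [ht0, hm0] at h
    rw [(div_eq_iff (ne_of_gt hπ0pos)).mp h]
    field_simp
    try ring
  -- law of total probability for S ∩ Qk1
  have htot1 : (μ (S ∩ Qk1)).toReal = p1 * (1 - a10) * π1 + p0 * a01 * π0 := by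
    have h := split_aux μ (S ∩ Qk1) hQk
    rw [Set.inter_comm (S ∩ Qk1) Qk, Set.inter_comm (S ∩ Qk1) Qkᶜ] at h
    rw [h, hc1, hc0]
  -- complements in the joints
  have hd1 : (μ (Qk ∩ (S ∩ Qk1ᶜ))).toReal = p1 * a10 * π1 := by
    have h := split_aux μ (Qk ∩ S) hQk1
    rw [Set.inter_assoc, Set.inter_assoc] at h
    rw [hm1, hc1] at h
    linarith
  have hd0 : (μ (Qkᶜ ∩ (S ∩ Qk1ᶜ))).toReal = p0 * (1 - a01) * π0 := by
    have h := split_aux μ (Qkᶜ ∩ S) hQk1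
    rw [Set.inter_assoc, Set.inter_assoc] at h
    rw [hm0, hc0] at h
    linarith
  have htot0 : (μ (S ∩ Qk1ᶜ)).toReal = p1 * a10 * π1 + p0 * (1 - a01) * π0 := by
    have h := split_aux μ (S ∩ Qk1ᶜ) hQk
    rw [Set.inter_comm (S ∩ Qk1ᶜ) Qk, Set.inter_comm (S ∩ Qk1ᶜ) Qkᶜ] at h
    rw [h, hd1, hd0]
  -- the two conditional probabilities
  have hP1 : (μ[|Qk1] S).toReal = (p0 * a01 * π0 + p1 * (1 - a10) * π1) / π1 := by
    rw [cond_toReal_aux μ hQk1, hstat1, Set.inter_comm, htot1]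
    ring_nf
  have hP0 : (μ[|Qk1ᶜ] S).toReal = (p0 * (1 - a01) * π0 + p1 * a10 * π1) / π0 := by
    rw [cond_toReal_aux μ hQk1.compl, hQk1c, Set.inter_comm, htot0]
    ring_nf
  refine ⟨hP0, hP1, ?_⟩
  rw [hP0, hP1]
  have hdiff : (p0 * (1 - a01) * π0 + p1 * a10 * π1) / π0
      - (p0 * a01 * π0 + p1 * (1 - a10) * π1) / π1
      = (p0 - p1) * (1 - a01 - a10) := by
    rw [hπ0, hπ1]
    field_simp
    ring
  have hpos : (0:ℝ) < 1 - a01 - a10 := by linarith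
  constructor
  · intro h
    have h2 : 0 ≤ (p0 - p1) * (1 - a01 - a10) :=
      mul_nonneg (by linarith) (le_of_lt hpos)
    linarith
  · intro h
    have h2 : 0 ≤ (p0 - p1) * (1 - a01 - a10) := by linarith
    nlinarith [h2, hpos]
end

section
/- Let F0, F1 be CDFs on ℝ with F0(x) ≥ F1(x) for all x, and let G0, G1 be CDFs with G0(x) ≥ G1(x) for all x. If X_i ~ F_i and Y_j ~ G_j are independent, then for any mixing weights arising from a01+a10<1: a00²·F0∗g0 + a01a10·F0∗g1 + a01a00·F1∗g0 + a01a11·F1∗g1 ≥ a10a00·F0∗g0 + a11a10·F0∗g1 + a10a01·F1∗g0 + a11²·F1∗g1 pointwise, where g_j is the density of G_j, a00 = 1−a01, a11 = 1−a10, and F∗g denotes convolution (the CDF of the corresponding independent sum). -/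
/-!
Write `A, B, C, D` for `F0 ∗ g0, F0 ∗ g1, F1 ∗ g0, F1 ∗ g1` at `x`. The difference of the two
sides is `(1 - a01 - a10) * ((1 - a01) * (A - B) + a01 * (C - D) + (1 - a01 - a10) * (B - D))`,
so it suffices that `B ≤ A`, `D ≤ C` and `D ≤ B`. The last one is `F1 ≤ F0` integrated against
`g1`. For the first two, `t ↦ F (x - t)` is antitone and nonnegative; by the layer-cake formula its
integral against a density is the integral of the masses of its superlevel sets, which are lower
sets of `ℝ`, and `G1 ≤ G0` says exactly that the density `g1` gives every lower set at most the
mass that `g0` gives it.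
-/

open MeasureTheory Set

theorem IsLowerSet.measure_le_of_measure_Iic_le {μ ν : Measure ℝ}
    (hIic : ∀ y, ν (Iic y) ≤ μ (Iic y)) {S : Set ℝ} (hS : IsLowerSet S) : ν S ≤ μ S := by
  by_cases hmax : ∃ b, IsGreatest S b
  · obtain ⟨b, hb⟩ := hmax
    have hSb : S = Iic b := subset_antisymm (fun x hx => hb.2 hx) (hS.Iic_subset hb.1)
    exact hSb ▸ hIic b
  -- Otherwise `S` is the countable directed union of the `Iic q` over rationals `q ∈ S`.
  have hSq : S = ⋃ q : {q : ℚ // (q : ℝ) ∈ S}, Iic (q : ℝ) := by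
    refine subset_antisymm (fun x hx => ?_) (iUnion_subset fun q => hS.Iic_subset q.2)
    obtain ⟨y, hyS, hxy⟩ : ∃ y ∈ S, x < y := by
      by_contra! h
      exact hmax ⟨x, hx, h⟩
    obtain ⟨q, hxq, hqy⟩ := exists_rat_btwn hxy
    exact mem_iUnion.2 ⟨⟨q, hS hqy.le hyS⟩, hxq.le⟩
  have hdir : Directed (· ⊆ ·) fun q : {q : ℚ // (q : ℝ) ∈ S} => Iic (q : ℝ) :=
    fun p q => if hpq : (p : ℝ) ≤ q then ⟨q, Iic_subset_Iic.2 hpq, subset_rfl⟩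
      else ⟨p, subset_rfl, Iic_subset_Iic.2 (not_le.1 hpq).le⟩
  rw [hSq, hdir.measure_iUnion, hdir.measure_iUnion]
  exact iSup_mono fun q => hIic q

theorem lintegral_ofReal_le_of_antitone_of_measure_Iic_le {μ ν : Measure ℝ}
    (hIic : ∀ y, ν (Iic y) ≤ μ (Iic y)) {f : ℝ → ℝ} (hf : Antitone f) (hf₀ : 0 ≤ f) :
    ∫⁻ x, ENNReal.ofReal (f x) ∂ν ≤ ∫⁻ x, ENNReal.ofReal (f x) ∂μ := by
  rw [lintegral_eq_lintegral_meas_lt ν (.of_forall hf₀) hf.measurable.aemeasurable,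
    lintegral_eq_lintegral_meas_lt μ (.of_forall hf₀) hf.measurable.aemeasurable]
  exact lintegral_mono fun t =>
    IsLowerSet.measure_le_of_measure_Iic_le hIic fun _ _ hba ha => ha.trans_le (hf hba)

theorem lintegral_ofReal_mul_eq_lintegral_withDensity {ρ : Measure ℝ} {f g : ℝ → ℝ}
    (hf : Measurable f) (hg : AEMeasurable g ρ) (hg₀ : 0 ≤ g) :
    ∫⁻ t, ENNReal.ofReal (f t * g t) ∂ρ =
      ∫⁻ t, ENNReal.ofReal (f t) ∂ρ.withDensity fun t => ENNReal.ofReal (g t) := by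
  rw [lintegral_withDensity_eq_lintegral_mul₀ hg.ennreal_ofReal hf.ennreal_ofReal.aemeasurable]
  refine lintegral_congr fun t => ?_
  rw [Pi.mul_apply, mul_comm, ENNReal.ofReal_mul (hg₀ t)]

theorem withDensity_ofReal_apply_Iic {ρ : Measure ℝ} {g : ℝ → ℝ} (hg₀ : 0 ≤ g)
    (hg : Integrable g ρ) (y : ℝ) :
    ρ.withDensity (fun t => ENNReal.ofReal (g t)) (Iic y) =
      ENNReal.ofReal (∫ t in Iic y, g t ∂ρ) := by
  rw [withDensity_apply _ measurableSet_Iic,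
    ofReal_integral_eq_lintegral_ofReal hg.integrableOn (.of_forall hg₀)]

theorem integral_mul_le_of_setIntegral_Iic_le {ρ : Measure ℝ} {f g₀ g₁ : ℝ → ℝ}
    (hf : Antitone f) (hf₀ : 0 ≤ f) (hg₀ : 0 ≤ g₀) (hg₁ : 0 ≤ g₁)
    (hg₀i : Integrable g₀ ρ) (hg₁i : Integrable g₁ ρ)
    (hfg₀ : Integrable (fun t => f t * g₀ t) ρ)
    (hIic : ∀ y, ∫ t in Iic y, g₁ t ∂ρ ≤ ∫ t in Iic y, g₀ t ∂ρ) :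
    ∫ t, f t * g₁ t ∂ρ ≤ ∫ t, f t * g₀ t ∂ρ := by
  rw [integral_eq_lintegral_of_nonneg_ae (.of_forall fun t => mul_nonneg (hf₀ t) (hg₁ t))
      (hf.measurable.aestronglyMeasurable.mul hg₁i.1),
    integral_eq_lintegral_of_nonneg_ae (.of_forall fun t => mul_nonneg (hf₀ t) (hg₀ t)) hfg₀.1]
  refine ENNReal.toReal_mono hfg₀.lintegral_lt_top.ne ?_
  rw [lintegral_ofReal_mul_eq_lintegral_withDensity hf.measurable hg₁i.1.aemeasurable hg₁,
    lintegral_ofReal_mul_eq_lintegral_withDensity hf.measurable hg₀i.1.aemeasurable hg₀]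
  refine lintegral_ofReal_le_of_antitone_of_measure_Iic_le (fun y => ?_) hf hf₀
  rw [withDensity_ofReal_apply_Iic hg₀ hg₀i, withDensity_ofReal_apply_Iic hg₁ hg₁i]
  exact ENNReal.ofReal_le_ofReal (hIic y)

theorem mixture_convolution_dominance_general
    (a01 a10 : ℝ)
    (h01 : a01 ∈ Set.Ioo (0:ℝ) 1)
    (hsum : a01 + a10 < 1)
    (F0 F1 : ℝ → ℝ) (g0 g1 : ℝ → ℝ)
    (hF0mono : Monotone F0) (hF1mono : Monotone F1)
    (hF0range : ∀ x, F0 x ∈ Set.Icc (0:ℝ) 1) (hF1range : ∀ x, F1 x ∈ Set.Icc (0:ℝ) 1)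
    (hg0nn : ∀ t, 0 ≤ g0 t) (hg1nn : ∀ t, 0 ≤ g1 t)
    (hg0int : Integrable g0) (hg1int : Integrable g1)
    (hFdom : ∀ x, F0 x ≥ F1 x)
    (G0 G1 : ℝ → ℝ)
    (hG0 : ∀ x, G0 x = ∫ t in Set.Iic x, g0 t)
    (hG1 : ∀ x, G1 x = ∫ t in Set.Iic x, g1 t)
    (hGdom : ∀ x, G0 x ≥ G1 x)
    (conv : (ℝ → ℝ) → (ℝ → ℝ) → ℝ → ℝ)
    (hconv : ∀ F g x, conv F g x = ∫ t, F (x - t) * g t)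
    (hint : ∀ (F : ℝ → ℝ) (g : ℝ → ℝ) (x : ℝ),
      (F = F0 ∨ F = F1) → (g = g0 ∨ g = g1) → Integrable fun t => F (x - t) * g t) :
    ∀ x : ℝ,
      (1 - a01) ^ 2 * conv F0 g0 x + a01 * a10 * conv F0 g1 x +
          a01 * (1 - a01) * conv F1 g0 x + a01 * (1 - a10) * conv F1 g1 x ≥
        a10 * (1 - a01) * conv F0 g0 x + (1 - a10) * a10 * conv F0 g1 x +
          a10 * a01 * conv F1 g0 x + (1 - a10) ^ 2 * conv F1 g1 x := by
  intro x
  have hGIic : ∀ y, ∫ t in Iic y, g1 t ≤ ∫ t in Iic y, g0 t := fun y => by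
    simpa only [hG0, hG1] using hGdom y
  have hAB : conv F0 g1 x ≤ conv F0 g0 x := by
    simp only [hconv]
    exact integral_mul_le_of_setIntegral_Iic_le (hF0mono.comp_antitone antitone_const_tsub)
      (fun t => (hF0range _).1) hg0nn hg1nn hg0int hg1int
      (hint F0 g0 x (.inl rfl) (.inl rfl)) hGIic
  have hCD : conv F1 g1 x ≤ conv F1 g0 x := by
    simp only [hconv]
    exact integral_mul_le_of_setIntegral_Iic_le (hF1mono.comp_antitone antitone_const_tsub)
      (fun t => (hF1range _).1) hg0nn hg1nn hg0int hg1int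
      (hint F1 g0 x (.inr rfl) (.inl rfl)) hGIic
  have hBD : conv F1 g1 x ≤ conv F0 g1 x := by
    simp only [hconv]
    exact integral_mono (hint F1 g1 x (.inr rfl) (.inr rfl)) (hint F0 g1 x (.inl rfl) (.inr rfl))
      fun t => mul_le_mul_of_nonneg_right (hFdom (x - t)) (hg1nn t)
  have hs : 0 ≤ 1 - a01 - a10 := by linarith
  have h1 : 0 ≤ 1 - a01 := by linarith [h01.2]
  linarith [mul_nonneg hs (mul_nonneg h1 (sub_nonneg.2 hAB)),
    mul_nonneg hs (mul_nonneg h01.1.le (sub_nonneg.2 hCD)),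
    mul_nonneg hs (mul_nonneg hs (sub_nonneg.2 hBD))]

/-- Lemma 4 (key inequality): stochastic dominance of Markov-mixture convolutions.
`F0 ∗ g j` is the CDF of the sum of independent variables with CDF `F0` and density `g j`. -/
theorem mixture_convolution_dominance
    (a01 a10 : ℝ)
    (h01 : a01 ∈ Set.Ioo (0:ℝ) 1) (h10 : a10 ∈ Set.Ioo (0:ℝ) 1)
    (hsum : a01 + a10 < 1)
    (F0 F1 : ℝ → ℝ) (g0 g1 : ℝ → ℝ)
    (hF0mono : Monotone F0) (hF1mono : Monotone F1)
    (hF0range : ∀ x, F0 x ∈ Set.Icc (0:ℝ) 1) (hF1range : ∀ x, F1 x ∈ Set.Icc (0:ℝ) 1)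
    (hg0nn : ∀ t, 0 ≤ g0 t) (hg1nn : ∀ t, 0 ≤ g1 t)
    (hg0int : Integrable g0) (hg1int : Integrable g1)
    (hg0pdf : ∫ t, g0 t = 1) (hg1pdf : ∫ t, g1 t = 1)
    (hFdom : ∀ x, F0 x ≥ F1 x)
    (G0 G1 : ℝ → ℝ)
    (hG0 : ∀ x, G0 x = ∫ t in Set.Iic x, g0 t)
    (hG1 : ∀ x, G1 x = ∫ t in Set.Iic x, g1 t)
    (hGdom : ∀ x, G0 x ≥ G1 x)
    (conv : (ℝ → ℝ) → (ℝ → ℝ) → ℝ → ℝ)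
    (hconv : ∀ F g x, conv F g x = ∫ t, F (x - t) * g t)
    (hint : ∀ (F : ℝ → ℝ) (g : ℝ → ℝ) (x : ℝ),
      (F = F0 ∨ F = F1) → (g = g0 ∨ g = g1) → Integrable fun t => F (x - t) * g t) :
    ∀ x : ℝ,
      (1 - a01) ^ 2 * conv F0 g0 x + a01 * a10 * conv F0 g1 x +
          a01 * (1 - a01) * conv F1 g0 x + a01 * (1 - a10) * conv F1 g1 x ≥
        a10 * (1 - a01) * conv F0 g0 x + (1 - a10) * a10 * conv F0 g1 x +
          a10 * a01 * conv F1 g0 x + (1 - a10) ^ 2 * conv F1 g1 x :=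
  mixture_convolution_dominance_general a01 a10 h01 hsum F0 F1 g0 g1 hF0mono hF1mono hF0range
    hF1range hg0nn hg1nn hg0int hg1int hFdom G0 G1 hG0 hG1 hGdom conv hconv hint
end
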